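/- arXiv:2501.07526 — 3 statements merged into one kernel-verified Lean document; each statement's English description precedes it below -/
import Mathlib

section
/- Define vectors u_1, …, u_s ∈ ℝ^b by the s-step recurrence u_j = σ( Y_j x_0 − (η/b) ∑_{l=1}^{j−1} G_{j,l} u_l ), where G_{j,l} = Y_j Y_lᵀ is the (j,l) block of the Gram matrix and σ is applied entrywise. Then u_j = σ(Y_j x_{j−1}) for every j = 1, …, s, and consequently x_0 − (η/b) ∑_{j=1}^s Y_jᵀ u_j = x_s. In other words, one block of the s-step SGD algorithm (computing the Gram blocks, correcting the pre-activations, and applying a single combined update) produces exactly the same iterate as s consecutive iterations of mini-batch SGD with the same sampled batches. -/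
open Matrix Finset

lemma mulVec_sum' {m n ι : Type*} [Fintype n] (A : Matrix m n ℝ) (t : Finset ι)
    (v : ι → n → ℝ) : A *ᵥ (∑ i ∈ t, v i) = ∑ i ∈ t, A *ᵥ v i :=
  map_sum A.mulVecLin v t

/-- One block of `s`-step SGD reproduces `s` consecutive mini-batch SGD iterations.
With SGD iterates `x_j = x_{j-1} - (η/b) Y_jᵀ σ(Y_j x_{j-1})` (0-indexed here) and the
`s`-step vectors `u_j = σ(Y_j x_0 - (η/b) ∑_{l<j} (Y_j Y_lᵀ) u_l)`, we have
`u_j = σ(Y_j x_{j-1})` for every `j = 1, …, s` and hence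
`x_0 - (η/b) ∑_{j=1}^s Y_jᵀ u_j = x_s`. -/
theorem sstep_block_update_equiv
    (b n s : ℕ) (hb : 0 < b) (hn : 0 < n) (hs : 0 < s)
    (η : ℝ) (σ : ℝ → ℝ) (hσ : ∀ t, σ t = 1 / (1 + Real.exp t))
    (Y : ℕ → Matrix (Fin b) (Fin n) ℝ)
    (x0 : Fin n → ℝ) (x : ℕ → Fin n → ℝ)
    (hx0 : x 0 = x0)
    (hx : ∀ j < s, x (j + 1) = x j - (η / b) • ((Y j)ᵀ *ᵥ fun i => σ ((Y j *ᵥ x j) i)))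
    (u : ℕ → Fin b → ℝ)
    (hu : ∀ j < s, u j = fun i =>
      σ ((Y j *ᵥ x0 - (η / b) • ∑ l ∈ Finset.range j, ((Y j * (Y l)ᵀ) *ᵥ u l)) i)) :
    (∀ j < s, u j = fun i => σ ((Y j *ᵥ x j) i)) ∧
      x0 - (η / b) • ∑ j ∈ Finset.range s, ((Y j)ᵀ *ᵥ u j) = x s := by
  have key : ∀ j, j ≤ s →
      x j = x0 - (η / b) • ∑ l ∈ Finset.range j, ((Y l)ᵀ *ᵥ u l) ∧
      (∀ l < j, u l = fun i => σ ((Y l *ᵥ x l) i)) := by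
    intro j
    induction j with
    | zero => intro _; simp [hx0]
    | succ j ih =>
      intro hjs
      have hj : j < s := Nat.lt_of_succ_le hjs
      obtain ⟨hxj, hul⟩ := ih (le_of_lt hj)
      have hYxj : Y j *ᵥ x j =
          Y j *ᵥ x0 - (η / b) • ∑ l ∈ Finset.range j, ((Y j * (Y l)ᵀ) *ᵥ u l) := by
        rw [hxj, Matrix.mulVec_sub, Matrix.mulVec_smul, mulVec_sum']
        congr 2
        refine Finset.sum_congr rfl fun l _ => ?_
        rw [Matrix.mulVec_mulVec]
      have huj : u j = fun i => σ ((Y j *ᵥ x j) i) := by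
        rw [hu j hj, hYxj]
      constructor
      · rw [hx j hj, ← huj, hxj, Finset.sum_range_succ, smul_add, sub_sub]
      · intro l hl
        rcases Nat.lt_succ_iff_lt_or_eq.mp hl with h | h
        · exact hul l h
        · subst h; exact huj
  obtain ⟨hxs, hus⟩ := key s le_rfl
  exact ⟨hus, hxs.symm⟩
end

section
/- Let K = s·Q and let Y_1, …, Y_K ∈ ℝ^{b×n} be given. Define the mini-batch SGD iterates x_j = x_{j−1} − (η/b)·Y_jᵀ σ(Y_j x_{j−1}) for j = 1, …, K, and define the s-step SGD trajectory z_0 = x_0, z_{k+1} = B_k(z_k) for k = 0, …, Q−1, where B_k(z) is the s-step block update: set u_j = σ( Y_{sk+j} z − (η/b) ∑_{l=1}^{j−1} (Y_{sk+j} Y_{sk+l}ᵀ) u_l ) for j = 1, …, s and B_k(z) = z − (η/b) ∑_{j=1}^s Y_{sk+j}ᵀ u_j. Then z_k = x_{sk} for every k = 0, …, Q; in particular the final s-step SGD output z_Q equals the SGD iterate x_K, so s-step SGD and SGD are mathematically equivalent given the same sampled batches. -/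
open Matrix Finset

/-- `s`-step SGD is mathematically equivalent to mini-batch SGD given the same sampled
batches.  Let `K = s·Q`, let `x` be the mini-batch SGD trajectory
`x_{j+1} = x_j - (η/b) Y_jᵀ σ(Y_j x_j)` (0-indexed), and let `z` be the `s`-step SGD
trajectory: `z 0 = x 0` and `z (k+1)` is obtained from `z k` by one `s`-step block update
(computing `u_j = σ(Y_{sk+j} z_k - (η/b) ∑_{l<j} (Y_{sk+j} Y_{sk+l}ᵀ) u_l)` and setting
`z_{k+1} = z_k - (η/b) ∑_{j<s} Y_{sk+j}ᵀ u_j`).  Then `z k = x (s·k)` for all `k ≤ Q`;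
in particular `z Q = x K`. -/
theorem sstep_sgd_trajectory_equiv
    (b n s Q : ℕ) (hb : 0 < b) (hn : 0 < n) (hs : 0 < s) (hQ : 0 < Q)
    (K : ℕ) (hK : K = s * Q)
    (η : ℝ) (σ : ℝ → ℝ) (hσ : ∀ t, σ t = 1 / (1 + Real.exp t))
    (Y : ℕ → Matrix (Fin b) (Fin n) ℝ)
    (x : ℕ → Fin n → ℝ)
    (hx : ∀ j < K, x (j + 1) = x j - (η / b) • ((Y j)ᵀ *ᵥ fun i => σ ((Y j *ᵥ x j) i)))
    (z : ℕ → Fin n → ℝ)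
    (hz0 : z 0 = x 0)
    (hz : ∀ k < Q, ∃ u : ℕ → Fin b → ℝ,
      (∀ j < s, u j = fun i =>
        σ ((Y (s * k + j) *ᵥ z k -
            (η / b) • ∑ l ∈ Finset.range j,
              ((Y (s * k + j) * (Y (s * k + l))ᵀ) *ᵥ u l)) i)) ∧
      z (k + 1) = z k - (η / b) • ∑ j ∈ Finset.range s, ((Y (s * k + j))ᵀ *ᵥ u j)) :
    ∀ k ≤ Q, z k = x (s * k) := by
  intro k hk
  induction k with
  | zero => simpa using hz0
  | succ k ih =>
    have hkQ : k < Q := hk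
    have hzk := ih (le_of_lt hkQ)
    obtain ⟨u, hu, hzk1⟩ := hz k hkQ
    have key : ∀ j ≤ s, x (s * k + j) =
        z k - (η / b) • ∑ l ∈ Finset.range j, ((Y (s * k + l))ᵀ *ᵥ u l) := by
      intro j hj
      induction j with
      | zero => simp [hzk]
      | succ j ihj =>
        have hjs : j < s := hj
        have hxj := ihj (le_of_lt hjs)
        have hlt : s * k + j < K := by
          rw [hK]
          calc s * k + j < s * (k + 1) := by nlinarith
            _ ≤ s * Q := Nat.mul_le_mul_left s hkQ
        have hstep := hx (s * k + j) hlt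
        have huj : (fun i => σ ((Y (s * k + j) *ᵥ x (s * k + j)) i)) = u j := by
          have hsum : Y (s * k + j) *ᵥ ∑ l ∈ Finset.range j, ((Y (s * k + l))ᵀ *ᵥ u l)
              = ∑ l ∈ Finset.range j, ((Y (s * k + j) * (Y (s * k + l))ᵀ) *ᵥ u l) := by
            rw [← Matrix.mulVecLin_apply, map_sum]
            simp [Matrix.mulVecLin_apply, mulVec_mulVec]
          rw [hu j hjs, hxj]
          funext i
          rw [mulVec_sub, mulVec_smul, hsum]
        rw [show s * k + (j + 1) = (s * k + j) + 1 by ring, hstep, huj, hxj,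
          Finset.sum_range_succ, smul_add, sub_sub]
    rw [hzk1, show s * (k + 1) = s * k + s by ring, key s le_rfl]
end

section
/- Suppose s divides τ, and for each processor team i = 1, …, p let Y^{[i]}_1, …, Y^{[i]}_τ ∈ ℝ^{β×n} be its sampled local batch matrices. Starting from a common iterate x ∈ ℝ^n, let x^{[i]}_τ be the result of τ plain local SGD steps x^{[i]}_j = x^{[i]}_{j−1} − (η/β)·(Y^{[i]}_j)ᵀ σ(Y^{[i]}_j x^{[i]}_{j−1}) with x^{[i]}_0 = x, and let x̃^{[i]} be the result of applying τ/s s-step block updates to x using the same batch matrices (each block update computes u_j = σ( Y^{[i]}_{sk+j} z − (η/β) ∑_{l<j} (Y^{[i]}_{sk+j}(Y^{[i]}_{sk+l})ᵀ) u_l ) for j = 1, …, s and replaces z by z − (η/β) ∑_{j=1}^s (Y^{[i]}_{sk+j})ᵀ u_j). Then x̃^{[i]} = x^{[i]}_τ for every i, and hence the HybridSGD global iterate (1/p) ∑_{i=1}^p x̃^{[i]} equals the FedAvg global iterate (1/p) ∑_{i=1}^p x^{[i]}_τ. That is, one outer iteration of HybridSGD (FedAvg whose local solver is s-step SGD) produces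 exactly the same global iterate as one outer iteration of FedAvg with τ local plain SGD steps. -/
open Matrix Finset

/-- One outer iteration of HybridSGD (FedAvg whose local solver is `s`-step SGD) produces
exactly the same global iterate as one outer iteration of FedAvg with `τ` plain local SGD
steps, when `s ∣ τ`.  For each processor `i`, `xloc i` is the plain local SGD trajectory
started at the common iterate `x`, and `z i` is the trajectory of `τ/s` `s`-step block
updates on the same local batch matrices; `xt i = z i (τ/s)` is the local HybridSGD result.
Then `xt i = xloc i τ` for every `i`, and the averaged global iterates coincide. -/
theorem hybridsgd_equals_fedavg
    (p β n s τ : ℕ) (hp : 0 < p) (hβ : 0 < β) (hn : 0 < n) (hs : 0 < s) (hτ : 0 < τ)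
    (hdvd : s ∣ τ)
    (η : ℝ) (σ : ℝ → ℝ) (hσ : ∀ t, σ t = 1 / (1 + Real.exp t))
    (Y : Fin p → ℕ → Matrix (Fin β) (Fin n) ℝ)
    (x : Fin n → ℝ)
    (xloc : Fin p → ℕ → Fin n → ℝ)
    (hxloc0 : ∀ i, xloc i 0 = x)
    (hxloc : ∀ i, ∀ j < τ, xloc i (j + 1) =
      xloc i j - (η / β) • ((Y i j)ᵀ *ᵥ fun r => σ ((Y i j *ᵥ xloc i j) r)))
    (z : Fin p → ℕ → Fin n → ℝ)
    (hz0 : ∀ i, z i 0 = x)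
    (hz : ∀ i, ∀ k < τ / s, ∃ u : ℕ → Fin β → ℝ,
      (∀ j < s, u j = fun r =>
        σ ((Y i (s * k + j) *ᵥ z i k -
            (η / β) • ∑ l ∈ Finset.range j,
              ((Y i (s * k + j) * (Y i (s * k + l))ᵀ) *ᵥ u l)) r)) ∧
      z i (k + 1) = z i k - (η / β) • ∑ j ∈ Finset.range s, ((Y i (s * k + j))ᵀ *ᵥ u j))
    (xt : Fin p → Fin n → ℝ)
    (hxt : ∀ i, xt i = z i (τ / s)) :
    (∀ i, xt i = xloc i τ) ∧
      ((1 : ℝ) / p) • ∑ i, xt i = ((1 : ℝ) / p) • ∑ i, xloc i τ := by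

  have key : ∀ i, ∀ k, k ≤ τ / s → z i k = xloc i (s * k) := by
    intro i k
    induction k with
    | zero => intro _; simp [hz0, hxloc0]
    | succ k ih =>
      intro hk
      have hk' : k < τ / s := Nat.lt_of_succ_le hk
      have ihz : z i k = xloc i (s * k) := ih (le_of_lt hk')
      obtain ⟨u, hu, hzstep⟩ := hz i k hk'
      have inner : ∀ j, j ≤ s → xloc i (s * k + j) =
          z i k - (η / β) • ∑ l ∈ Finset.range j, ((Y i (s * k + l))ᵀ *ᵥ u l) := by
        intro j
        induction j with
        | zero => intro _; simp [ihz]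
        | succ j ihj =>
          intro hj
          have hjs : j < s := hj
          have ihj' := ihj (le_of_lt hjs)
          have hlt : s * k + j < τ := by
            have h1 : s * k + j + 1 ≤ s * (k + 1) := by
              rw [Nat.mul_succ]; omega
            have h2 : s * (k + 1) ≤ s * (τ / s) := Nat.mul_le_mul_left s hk
            have h3 : s * (τ / s) = τ := Nat.mul_div_cancel' hdvd
            omega
          have hmv : Y i (s * k + j) *ᵥ xloc i (s * k + j) =
              Y i (s * k + j) *ᵥ z i k - (η / β) • ∑ l ∈ Finset.range j,
                ((Y i (s * k + j) * (Y i (s * k + l))ᵀ) *ᵥ u l) := by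
            rw [ihj', Matrix.mulVec_sub, Matrix.mulVec_smul]
            have hsum := map_sum (Matrix.mulVecLin (Y i (s * k + j)))
              (fun l => ((Y i (s * k + l))ᵀ *ᵥ u l)) (Finset.range j)
            simp only [Matrix.mulVecLin_apply, Matrix.mulVec_mulVec] at hsum
            rw [hsum]
          have huj : u j = fun r => σ ((Y i (s * k + j) *ᵥ xloc i (s * k + j)) r) := by
            rw [hu j hjs, hmv]
          have hx := hxloc i (s * k + j) hlt
          rw [← huj] at hx
          rw [show s * k + (j + 1) = (s * k + j) + 1 from rfl, hx, ihj',
            Finset.sum_range_succ, smul_add, sub_sub]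
      have := inner s le_rfl
      rw [hzstep, Nat.mul_succ]
      exact this.symm
  have hτs : s * (τ / s) = τ := Nat.mul_div_cancel' hdvd
  have hxeq : ∀ i, xt i = xloc i τ := by
    intro i
    rw [hxt i, key i (τ / s) le_rfl, hτs]
  exact ⟨hxeq, by simp only [hxeq]⟩
end
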